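/- arXiv:2508.10323 — 2 statements merged into one kernel-verified Lean document; each statement's English description precedes it below -/
import Mathlib

section
/- Let $(X,d)$ be a category enriched over the monoidal poset $\mathbb{W}(\mathbb{L})$. Then for every $n \in \mathbb{N}_{>0}$, defining $d_{(n)}(x,y) = d(x,y)(m_{(n)})$, the pair $(X, d_{(n)})$ is an $\mathbb{L}$-category, i.e. $d_{(n)}(x,x) = 0$ and $d_{(n)}(x,z) \leq d_{(n)}(x,y) + d_{(n)}(y,z)$ for all $x,y,z \in X$. -/
open scoped Classical ENNReal
open Tropical

noncomputable section

/-- The Lawvere quantale `𝕃 = [0,∞]` viewed as a rig: addition is `min`, multiplication is `+`. -/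
abbrev Trop : Type := Tropical ℝ≥0∞

/-- Coefficient of a formal power series in infinitely many variables. -/
def cf {σ : Type} (φ : MvPowerSeries σ ℕ) (d : σ →₀ ℕ) : ℕ := MvPowerSeries.coeff (R := ℕ) d φ

/-- The multiset of nonzero entries of an exponent vector. -/
def parts (d : ℕ →₀ ℕ) : Multiset ℕ := d.support.val.map d

lemma zero_not_mem_parts (d : ℕ →₀ ℕ) : (0 : ℕ) ∉ parts d := by
  intro h
  obtain ⟨a, ha, ha0⟩ := Multiset.mem_map.mp h
  exact Finsupp.mem_support_iff.mp (Finset.mem_val.mp ha) ha0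

/-- Partitions: multisets of positive natural numbers. -/
def Ptn : Type := {s : Multiset ℕ // (0 : ℕ) ∉ s}

/-- The monomial symmetric function `m_λ`, as a symmetric power series of bounded degree
in the variables `x_0, x_1, x_2, …`. -/
def mfun (l : Multiset ℕ) : MvPowerSeries ℕ ℕ := fun d => if parts d = l then 1 else 0

/-- `Λ`, the rig of symmetric functions with coefficients in `ℕ`: the subsemiring of
power series generated by the monomial symmetric functions. -/
def Lam : Subsemiring (MvPowerSeries ℕ ℕ) :=
  Subsemiring.closure (Set.range fun l : Ptn => mfun l.1)

/-- `m_λ` as an element of `Λ`. -/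
def mP (l : Ptn) : Lam := ⟨mfun l.1, Subsemiring.subset_closure (Set.mem_range_self l)⟩

/-- The one-part partition `(n)`. -/
def pnat (n : ℕ) (hn : 0 < n) : Ptn := ⟨{n}, fun h => hn.ne' (Multiset.mem_singleton.mp h).symm⟩

/-- The Witt vectors of the Lawvere quantale: rig homomorphisms `Λ → 𝕃`. -/
abbrev WL := Lam →+* Trop

/-- Row margin of an exponent vector on `ℕ × ℕ`. -/
def rowM (e : (ℕ × ℕ) →₀ ℕ) : ℕ →₀ ℕ := e.mapDomain Prod.fst
/-- Column margin of an exponent vector on `ℕ × ℕ`. -/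
def colM (e : (ℕ × ℕ) →₀ ℕ) : ℕ →₀ ℕ := e.mapDomain Prod.snd

/-- The elementary tensor `a ⊗ b` in `Λ ⊗ Λ`, realized as a power series on variables
`x_i ⊗ x_j` indexed by `ℕ × ℕ`. -/
def tens (a b : MvPowerSeries ℕ ℕ) : MvPowerSeries (ℕ × ℕ) ℕ :=
  fun e => cf a (rowM e) * cf b (colM e)

/-- Comultiplication `Δ^×`: substitute the family `x_i ⊗ x_j` for the variables,
along a bijection `ℕ ≃ ℕ × ℕ`. -/
def Dmul (eqt : ℕ ≃ ℕ × ℕ) (φ : MvPowerSeries ℕ ℕ) : MvPowerSeries (ℕ × ℕ) ℕ :=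
  fun e => cf φ (Finsupp.equivMapDomain eqt.symm e)

/-- Left margin of an exponent vector on `ℕ ⊕ ℕ`. -/
def lM (e : (ℕ ⊕ ℕ) →₀ ℕ) : ℕ →₀ ℕ := Finsupp.comapDomain Sum.inl e Sum.inl_injective.injOn
/-- Right margin of an exponent vector on `ℕ ⊕ ℕ`. -/
def rM (e : (ℕ ⊕ ℕ) →₀ ℕ) : ℕ →₀ ℕ := Finsupp.comapDomain Sum.inr e Sum.inr_injective.injOn

/-- The elementary tensor `a ⊗ b` realized as a power series on `ℕ ⊕ ℕ`. -/
def tensP (a b : MvPowerSeries ℕ ℕ) : MvPowerSeries (ℕ ⊕ ℕ) ℕ :=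
  fun e => cf a (lM e) * cf b (rM e)

/-- Coaddition `Δ^+`: substitute `x_i ⊗ 1` and `1 ⊗ x_i` for the variables,
along a bijection `ℕ ≃ ℕ ⊕ ℕ`. -/
def Dadd (eqp : ℕ ≃ ℕ ⊕ ℕ) (φ : MvPowerSeries ℕ ℕ) : MvPowerSeries (ℕ ⊕ ℕ) ℕ :=
  fun e => cf φ (Finsupp.equivMapDomain eqp.symm e)

/-- The order on `𝕎(𝕃)`: `f ≤ g` iff `g (m_λ) ≤ f (m_λ)` (usual order on `[0,∞]`)
for every partition `λ ∈ ℙ`. -/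
def leF (F G : Lam → Trop) : Prop :=
  ∀ l : Ptn, l.1 ≠ 0 → untrop (G (mP l)) ≤ untrop (F (mP l))

/-- Witt multiplication: `(f ⊗ g)(φ) = min` of `f(m_μ) + g(m_μ')` over the pairs `(μ, μ')`
occurring in `Δ^×(φ)`. -/
def wmulF (eqt : ℕ ≃ ℕ × ℕ) (F G : Lam → Trop) : Lam → Trop := fun φ =>
  trop (sInf {x : ℝ≥0∞ | ∃ e, cf (Dmul eqt (φ : MvPowerSeries ℕ ℕ)) e ≠ 0 ∧
    x = untrop (F (mP ⟨parts (rowM e), zero_not_mem_parts _⟩)) +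
        untrop (G (mP ⟨parts (colM e), zero_not_mem_parts _⟩))})

/-- Witt addition: `(f ⊕ g)(φ) = min` of `f(m_μ) + g(m_μ')` over the pairs `(μ, μ')`
occurring in `Δ^+(φ)`. -/
def waddF (eqp : ℕ ≃ ℕ ⊕ ℕ) (F G : Lam → Trop) : Lam → Trop := fun φ =>
  trop (sInf {x : ℝ≥0∞ | ∃ e, cf (Dadd eqp (φ : MvPowerSeries ℕ ℕ)) e ≠ 0 ∧
    x = untrop (F (mP ⟨parts (lM e), zero_not_mem_parts _⟩)) +
        untrop (G (mP ⟨parts (rM e), zero_not_mem_parts _⟩))})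

/-- Specification of the multiplicative unit `0̄` of `𝕎(𝕃)`:
`0̄(m_(n)) = 0` for one-part partitions and `0̄(m_λ) = ∞` otherwise. -/
def zbar (z : WL) : Prop :=
  ∀ l : Ptn, z (mP l) = if l.1.card ≤ 1 then trop (0 : ℝ≥0∞) else trop (⊤ : ℝ≥0∞)

/-! Evaluating the unit axiom `0̄ ≤ d(x,x)` at `m_(n)` gives `d(x,x)(m_(n)) ≤ 0̄(m_(n)) = 0`.
Evaluating the composition axiom at `m_(n)` bounds `d(x,z)(m_(n))` by the Witt product, a minimum
over the terms of `Δ^×(m_(n))`; its diagonal term `m_(n) ⊗ m_(n)`, witnessed by the monomial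
`(x_0 ⊗ x_0)^n`, yields the triangle inequality. -/

lemma parts_single (a : ℕ) {n : ℕ} (hn : n ≠ 0) : parts (Finsupp.single a n) = {n} := by
  simp [parts, Finsupp.support_single, hn]

lemma pnat_ne_zero {n : ℕ} (hn : 0 < n) : (pnat n hn).1 ≠ 0 :=
  Multiset.singleton_ne_zero n

lemma untrop_le_of_leF {F G : Lam → Trop} (h : leF F G) {n : ℕ} (hn : 0 < n) :
    untrop (G (mP (pnat n hn))) ≤ untrop (F (mP (pnat n hn))) :=
  h _ (pnat_ne_zero hn)

lemma zbar.apply_pnat {z : WL} (hz : zbar z) {n : ℕ} (hn : 0 < n) :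
    z (mP (pnat n hn)) = trop 0 :=
  (hz _).trans (if_pos (Multiset.card_singleton n).le)

lemma untrop_wmulF_le (eqt : ℕ ≃ ℕ × ℕ) (F G : Lam → Trop) (φ : Lam) (e : (ℕ × ℕ) →₀ ℕ)
    (he : cf (Dmul eqt (φ : MvPowerSeries ℕ ℕ)) e ≠ 0) :
    untrop (wmulF eqt F G φ) ≤ untrop (F (mP ⟨parts (rowM e), zero_not_mem_parts _⟩)) +
      untrop (G (mP ⟨parts (colM e), zero_not_mem_parts _⟩)) :=
  sInf_le ⟨e, he, rfl⟩

lemma cf_Dmul_mfun_single (eqt : ℕ ≃ ℕ × ℕ) (a : ℕ × ℕ) {n : ℕ} (hn : n ≠ 0) :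
    cf (Dmul eqt (mfun {n})) (Finsupp.single a n) = 1 := by
  change cf (mfun {n}) (Finsupp.equivMapDomain eqt.symm (Finsupp.single a n)) = 1
  rw [Finsupp.equivMapDomain_single]
  exact if_pos (parts_single _ hn)

lemma parts_rowM_single (a : ℕ × ℕ) {n : ℕ} (hn : n ≠ 0) :
    parts (rowM (Finsupp.single a n)) = {n} := by
  rw [rowM, Finsupp.mapDomain_single, parts_single _ hn]

lemma parts_colM_single (a : ℕ × ℕ) {n : ℕ} (hn : n ≠ 0) :
    parts (colM (Finsupp.single a n)) = {n} := by
  rw [colM, Finsupp.mapDomain_single, parts_single _ hn]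

lemma untrop_wmulF_pnat_le (eqt : ℕ ≃ ℕ × ℕ) (F G : Lam → Trop) {n : ℕ} (hn : 0 < n) :
    untrop (wmulF eqt F G (mP (pnat n hn))) ≤
      untrop (F (mP (pnat n hn))) + untrop (G (mP (pnat n hn))) := by
  let e : (ℕ × ℕ) →₀ ℕ := Finsupp.single (0, 0) n
  have hrow : (⟨parts (rowM e), zero_not_mem_parts _⟩ : Ptn) = pnat n hn :=
    Subtype.ext (parts_rowM_single _ hn.ne')
  have hcol : (⟨parts (colM e), zero_not_mem_parts _⟩ : Ptn) = pnat n hn :=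
    Subtype.ext (parts_colM_single _ hn.ne')
  have he : cf (Dmul eqt (mP (pnat n hn) : MvPowerSeries ℕ ℕ)) e ≠ 0 := by
    simp only [mP, pnat, e, cf_Dmul_mfun_single _ _ hn.ne']
    exact one_ne_zero
  simpa only [hrow, hcol] using untrop_wmulF_le eqt F G _ e he

/-- For any `𝕎(𝕃)`-category `(X, d)` (i.e. `0̄ ≤ d(x,x)` and
`d(x,y) ⊗ d(y,z) ≤ d(x,z)` in the monoidal poset `𝕎(𝕃)`) and any `n ∈ ℕ_{>0}`,
setting `d_(n)(x,y) = d(x,y)(m_(n))`, the pair `(X, d_(n))` is an `𝕃`-category: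
`d_(n)(x,x) = 0` and `d_(n)(x,z) ≤ d_(n)(x,y) + d_(n)(y,z)`. -/
theorem component_L_category (eqt : ℕ ≃ ℕ × ℕ) (X : Type) (d : X → X → WL)
    (hid : ∃ z : WL, zbar z ∧ ∀ x : X, leF ⇑z ⇑(d x x))
    (hcomp : ∀ x y w : X, leF (wmulF eqt ⇑(d x y) ⇑(d y w)) ⇑(d x w)) :
    ∀ (n : ℕ) (hn : 0 < n),
      (∀ x : X, d x x (mP (pnat n hn)) = trop (0 : ℝ≥0∞)) ∧
      (∀ x y w : X, untrop (d x w (mP (pnat n hn))) ≤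
        untrop (d x y (mP (pnat n hn))) + untrop (d y w (mP (pnat n hn)))) := by
  intro n hn
  obtain ⟨z, hz, hzd⟩ := hid
  refine ⟨fun x => ?_, fun x y w => ?_⟩
  · have h := untrop_le_of_leF (hzd x) hn
    rw [hz.apply_pnat, untrop_trop, nonpos_iff_eq_zero] at h
    rw [← h, trop_untrop]
  · exact (untrop_le_of_leF (hcomp x y w) hn).trans (untrop_wmulF_pnat_le eqt _ _ hn)

end
end

section
/- Let $(X,d)$ be a $\mathbb{W}(\mathbb{L})$-category. For every partition $\lambda$, the function $d_\lambda(x,y) := d(x,y)(m_\lambda)$ satisfies the triangle inequality: $d_\lambda(x,z) \leq d_\lambda(x,y) + d_\lambda(y,z)$ for all $x,y,z \in X$. -/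
open scoped Classical ENNReal
open Tropical

noncomputable section

lemma parts_mapDomain_of_injective {g : ℕ → ℕ} (hg : Function.Injective g) (v : ℕ →₀ ℕ) :
    parts (v.mapDomain g) = parts v := by
  have h := Finsupp.embDomain_eq_mapDomain (⟨g, hg⟩ : ℕ ↪ ℕ) v
  rw [Function.Embedding.coeFn_mk] at h
  rw [← h, parts, parts, Finsupp.support_embDomain, Finset.map_val, Multiset.map_map]
  exact Multiset.map_congr rfl fun i _ => Finsupp.embDomain_apply_self _ v i

lemma parts_toFinsupp {L : List ℕ} (hL : 0 ∉ L) : parts L.toFinsupp = L := by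
  have hsupp : L.toFinsupp.support = Finset.range L.length := by
    ext i
    simp only [Finsupp.mem_support_iff, Finset.mem_range, List.toFinsupp_apply]
    refine ⟨fun h => ?_, fun h => ?_⟩
    · by_contra hi
      exact h (List.getD_eq_default _ _ (not_lt.mp hi))
    · rw [List.getD_eq_getElem _ _ h]
      exact fun h0 => hL (h0 ▸ List.getElem_mem h)
  rw [parts, hsupp, Finset.range_val, Multiset.range, Multiset.map_coe]
  congr 1
  refine List.ext_getElem (by simp) fun i _ hi => ?_
  simp [List.getElem?_eq_getElem hi]

lemma exists_parts_eq (l : Ptn) : ∃ v : ℕ →₀ ℕ, parts v = l.1 :=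
  ⟨l.1.toList.toFinsupp, by
    rw [parts_toFinsupp (fun h => l.2 (Multiset.mem_toList.mp h)), Multiset.coe_toList]⟩

/-- The exponent vector of the monomial `∏ᵢ (xᵢ ⊗ xᵢ)^(vᵢ)`. -/
def diagExp (v : ℕ →₀ ℕ) : (ℕ × ℕ) →₀ ℕ := v.mapDomain fun i => (i, i)

lemma rowM_diagExp (v : ℕ →₀ ℕ) : rowM (diagExp v) = v := by
  rw [rowM, diagExp, ← Finsupp.mapDomain_comp]
  exact Finsupp.mapDomain_id

lemma colM_diagExp (v : ℕ →₀ ℕ) : colM (diagExp v) = v := by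
  rw [colM, diagExp, ← Finsupp.mapDomain_comp]
  exact Finsupp.mapDomain_id

lemma cf_Dmul_mfun_diagExp (eqt : ℕ ≃ ℕ × ℕ) (v : ℕ →₀ ℕ) :
    cf (Dmul eqt (mfun (parts v))) (diagExp v) = 1 := by
  have hinj : Function.Injective (eqt.symm ∘ fun i : ℕ => (i, i)) :=
    eqt.symm.injective.comp fun i j h => congrArg Prod.fst h
  change (if parts _ = parts v then 1 else 0) = 1
  rw [Finsupp.equivMapDomain_eq_mapDomain, diagExp, ← Finsupp.mapDomain_comp,
    parts_mapDomain_of_injective hinj, if_pos rfl]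

/-- The term `m_λ ⊗ m_λ` of `Δ^×(m_λ)` bounds `(f ⊗ g)(m_λ)`. -/
lemma untrop_wmulF_mP_le (eqt : ℕ ≃ ℕ × ℕ) (F G : Lam → Trop) (l : Ptn) :
    untrop (wmulF eqt F G (mP l)) ≤ untrop (F (mP l)) + untrop (G (mP l)) := by
  obtain ⟨v, hv⟩ := exists_parts_eq l
  have hl : (⟨parts v, zero_not_mem_parts v⟩ : Ptn) = l := Subtype.ext hv
  have he : cf (Dmul eqt (mP l : MvPowerSeries ℕ ℕ)) (diagExp v) ≠ 0 := by
    change cf (Dmul eqt (mfun l.1)) _ ≠ 0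
    rw [← hv, cf_Dmul_mfun_diagExp]
    exact one_ne_zero
  have key := untrop_wmulF_le eqt F G (mP l) (diagExp v) he
  simpa only [rowM_diagExp, colM_diagExp, hl] using key

theorem component_triangle_general (eqt : ℕ ≃ ℕ × ℕ) (X : Type) (d : X → X → WL)
    (hcomp : ∀ x y w : X, leF (wmulF eqt ⇑(d x y) ⇑(d y w)) ⇑(d x w)) :
    ∀ (l : Ptn), l.1 ≠ 0 → ∀ x y w : X,
      untrop (d x w (mP l)) ≤ untrop (d x y (mP l)) + untrop (d y w (mP l)) :=
  fun l hl x y w => (hcomp x y w l hl).trans (untrop_wmulF_mP_le eqt _ _ l)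

/-- For any `𝕎(𝕃)`-category `(X, d)` and every partition `λ`, the function
`d_λ(x,y) := d(x,y)(m_λ)` satisfies the triangle inequality:
`d_λ(x,z) ≤ d_λ(x,y) + d_λ(y,z)` for all `x, y, z ∈ X`. -/
theorem component_triangle (eqt : ℕ ≃ ℕ × ℕ) (X : Type) (d : X → X → WL)
    (hid : ∃ z : WL, zbar z ∧ ∀ x : X, leF ⇑z ⇑(d x x))
    (hcomp : ∀ x y w : X, leF (wmulF eqt ⇑(d x y) ⇑(d y w)) ⇑(d x w)) :
    ∀ (l : Ptn), l.1 ≠ 0 → ∀ x y w : X,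
      untrop (d x w (mP l)) ≤ untrop (d x y (mP l)) + untrop (d y w (mP l)) :=
  component_triangle_general eqt X d hcomp

end
end
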